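/- arXiv:0704.3095 — 7 statements merged into one kernel-verified Lean document; each statement's English description precedes it below -/
import Mathlib

section
/- Let H be a complex Hilbert space. There is no positive isometric linear map from ℓ¹₂ into B(H): that is, there is no ℂ-linear map u : ℂ² → B(H) such that ‖u(x)‖ = |x₁| + |x₂| for all x = (x₁, x₂) ∈ ℂ², and such that u(x) ≥ 0 in B(H) whenever both coordinates x₁, x₂ are nonnegative real numbers. -/
open scoped InnerProductSpace

/-- There is no positive isometric linear map from `ℓ¹₂` into `B(H)`:
no `ℂ`-linear `u : ℂ × ℂ → B(H)` with `‖u x‖ = |x₁| + |x₂|` for all `x`, sending pairs of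
nonnegative reals to positive operators. -/
theorem no_positive_isometry_of_ell_one_two_into_BH
    (H : Type*) [NormedAddCommGroup H] [InnerProductSpace ℂ H] [CompleteSpace H] :
    ¬ ∃ u : (ℂ × ℂ) →ₗ[ℂ] (H →L[ℂ] H),
        (∀ x : ℂ × ℂ, ‖u x‖ = ‖x.1‖ + ‖x.2‖) ∧
        (∀ a b : ℝ, 0 ≤ a → 0 ≤ b → (u ((a : ℂ), (b : ℂ))).IsPositive) := by
  rintro ⟨u, hnorm, hpos⟩
  set A : H →L[ℂ] H := u (1, 0) with hAdef
  set B : H →L[ℂ] H := u (0, 1) with hBdef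
  have hA : A.IsPositive := by
    have := hpos 1 0 zero_le_one le_rfl
    simpa using this
  have hB : B.IsPositive := by
    have := hpos 0 1 le_rfl zero_le_one
    simpa using this
  have hA0 : (0 : H →L[ℂ] H) ≤ A := (ContinuousLinearMap.nonneg_iff_isPositive A).mpr hA
  have hB0 : (0 : H →L[ℂ] H) ≤ B := (ContinuousLinearMap.nonneg_iff_isPositive B).mpr hB
  have nA : ‖A‖ = 1 := by simpa using hnorm (1, 0)
  have nB : ‖B‖ = 1 := by simpa using hnorm (0, 1)
  have hsub : A - B = u (1, -1) := by
    rw [hAdef, hBdef, ← map_sub]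
    norm_num [Prod.ext_iff]
  have nT : ‖A - B‖ = 2 := by
    rw [hsub]
    have := hnorm (1, -1)
    simp at this
    rw [this]; norm_num
  -- nontriviality
  have hAne : A ≠ 0 := by
    intro h; rw [h, norm_zero] at nA; norm_num at nA
  have : Nontrivial (H →L[ℂ] H) := nontrivial_of_ne A 0 hAne
  -- T := A - B is self-adjoint, with -1 ≤ T ≤ 1
  have hsa : IsSelfAdjoint (A - B) := hA.isSelfAdjoint.sub hB.isSelfAdjoint
  have hT1 : A - B ≤ algebraMap ℝ (H →L[ℂ] H) 1 := by
    calc A - B ≤ A := sub_le_self A hB0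
    _ ≤ algebraMap ℝ (H →L[ℂ] H) ‖A‖ := hA.isSelfAdjoint.le_algebraMap_norm_self
    _ = algebraMap ℝ (H →L[ℂ] H) 1 := by rw [nA]
  have hT2 : algebraMap ℝ (H →L[ℂ] H) (-1) ≤ A - B := by
    have : B - A ≤ algebraMap ℝ (H →L[ℂ] H) 1 := by
      calc B - A ≤ B := sub_le_self B hA0
      _ ≤ algebraMap ℝ (H →L[ℂ] H) ‖B‖ := hB.isSelfAdjoint.le_algebraMap_norm_self
      _ = algebraMap ℝ (H →L[ℂ] H) 1 := by rw [nB]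
    have := neg_le_neg this
    rw [neg_sub] at this
    simpa [map_neg] using this
  -- spectrum of A - B lies in [-1, 1]
  have hspec_le : ∀ r ∈ spectrum ℝ (A - B), r ≤ 1 :=
    (le_algebraMap_iff_spectrum_le (ha := hsa)).mp hT1
  have hspec_ge : ∀ r ∈ spectrum ℝ (A - B), (-1 : ℝ) ≤ r :=
    (algebraMap_le_iff_le_spectrum (ha := hsa)).mp hT2
  have hnorm_le : ‖A - B‖ ≤ 1 := by
    rcases CStarAlgebra.norm_or_neg_norm_mem_spectrum hsa with h | h
    · exact hspec_le _ h
    · have := hspec_ge _ h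
      linarith
  rw [nT] at hnorm_le
  norm_num at hnorm_le
end

section
/- Let A be a C*-algebra of complex dimension at least 2, and let A' denote its continuous dual space with its usual cone of positive functionals. Then there exists no isometric positive linear map from A' into any C*-algebra: for every C*-algebra B and every ℂ-linear map T : A' → B with ‖T(φ)‖ = ‖φ‖ for all φ ∈ A', and with T(φ) ≥ 0 in B whenever φ is a positive functional, one obtains a contradiction (no such T exists). -/
/-!
Positive elements `u, v` of a C⋆-algebra satisfy `‖u - v‖ ≤ max ‖u‖ ‖v‖`, so a positive isometry
`T : A' → B` would give `‖φ - ψ‖ ≤ 1` for all positive functionals `φ, ψ` of norm at most one.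

On the other hand, if every self-adjoint element of `A` had at most one nonzero spectral value,
every self-adjoint element would be a real multiple of a projection, any two projections would
be proportional, and `A` would have dimension at most one. So some self-adjoint `a` has two
distinct nonzero spectral values; continuous functional calculus turns `a` into a contraction
`z` with `1` and `-1` in its spectrum. A norming functional of `1 ± z` on the unitization has
norm one and value one at `1`, hence is positive, and restricting these to `A` gives positive
functionals `φ, ψ` of norm at most one with `φ z = 1`, `ψ z = -1`, so `‖φ - ψ‖ ≥ 2`.
-/

open Complex
open scoped ComplexOrder ComplexStarModule

lemma Complex.eq_one_of_add_eq_two {u v : ℂ} (huv : u + v = 2) (hu : ‖u‖ ≤ 1) (hv : ‖v‖ ≤ 1) :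
    u = 1 ∧ v = 1 := by
  have hsum : ‖u + v‖ = 2 := by simp [huv]
  have huv' : u = v := eq_of_norm_eq_of_norm_add_eq (by linarith [norm_add_le u v])
    (by linarith [norm_add_le u v])
  subst huv'
  constructor <;> linear_combination huv / 2

lemma exists_continuous_abs_le_one_eq_one_eq_neg_one {s t : ℝ} (hs : s ≠ 0) (ht : t ≠ 0)
    (hst : s ≠ t) :
    ∃ f : ℝ → ℝ, Continuous f ∧ f 0 = 0 ∧ f s = 1 ∧ f t = -1 ∧ ∀ x, |f x| ≤ 1 := by
  have hst' : s - t ≠ 0 := sub_ne_zero.mpr hst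
  have hts' : t - s ≠ 0 := sub_ne_zero.mpr hst.symm
  -- the Lagrange interpolant through `(0, 0)`, `(s, 1)`, `(t, -1)`, clamped to `[-1, 1]`
  refine ⟨fun x ↦ max (-1) (min 1 (x * (x - t) / (s * (s - t)) - x * (x - s) / (t * (t - s)))),
    by fun_prop, by simp, ?_, ?_, fun x ↦ abs_le.mpr ⟨le_max_left _ _, ?_⟩⟩
  · simp [div_self (mul_ne_zero hs hst')]
  · simp [div_self (mul_ne_zero ht hts')]
  · exact max_le (by norm_num) (min_le_left _ _)

lemma IsSelfAdjoint.eq_zero_of_mul_self_eq_zero {E : Type*} [NonUnitalNormedRing E] [StarRing E]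
    [CStarRing E] {x : E} (hx : IsSelfAdjoint x) (h : x * x = 0) : x = 0 :=
  (CStarRing.star_mul_self_eq_zero_iff x).mp (by rwa [hx.star_eq])

lemma isIdempotentElem_inv_smul_of_mul_self_eq_smul {K R : Type*} [Field K] [NonUnitalRing R]
    [Module K R] [IsScalarTower K R R] [SMulCommClass K R R] {x : R} {β : K}
    (hβ : x * x = β • x) : IsIdempotentElem (β⁻¹ • x) := by
  rcases eq_or_ne β 0 with rfl | hβ0
  · simp [IsIdempotentElem]
  · rw [IsIdempotentElem, smul_mul_smul_comm, hβ, smul_smul, mul_assoc, inv_mul_cancel₀ hβ0,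
      mul_one]

section Unital
variable {E : Type*} [CStarAlgebra E]

lemma IsSelfAdjoint.norm_le_of_mem_Icc [PartialOrder E] [StarOrderedRing E] {w : E}
    (hw : IsSelfAdjoint w) {r : ℝ} (hr : 0 ≤ r)
    (hw' : w ∈ Set.Icc (-algebraMap ℝ E r) (algebraMap ℝ E r)) : ‖w‖ ≤ r := by
  obtain _ | _ := subsingleton_or_nontrivial E
  · simpa [Subsingleton.elim w 0] using hr
  rw [← map_neg] at hw'
  rcases CStarAlgebra.norm_or_neg_norm_mem_spectrum hw with h | h
  · exact (le_algebraMap_iff_spectrum_le hw).mp hw'.2 _ h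
  · linarith [(algebraMap_le_iff_le_spectrum hw).mp hw'.1 _ h]

lemma norm_sub_le_max_of_nonneg [PartialOrder E] [StarOrderedRing E] {u v : E}
    (hu : 0 ≤ u) (hv : 0 ≤ v) : ‖u - v‖ ≤ max ‖u‖ ‖v‖ := by
  have hmono : Monotone (algebraMap ℝ E) := algebraMap_mono E
  refine (IsSelfAdjoint.of_nonneg hu |>.sub (.of_nonneg hv)).norm_le_of_mem_Icc
    (le_max_of_le_left (norm_nonneg u)) ⟨?_, ?_⟩
  · calc -algebraMap ℝ E (max ‖u‖ ‖v‖) ≤ -v :=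
          neg_le_neg <| (IsSelfAdjoint.of_nonneg hv).le_algebraMap_norm_self.trans
            (hmono (le_max_right _ _))
      _ ≤ u - v := by simpa using hu
  · calc u - v ≤ u := sub_le_self u hv
      _ ≤ algebraMap ℝ E (max ‖u‖ ‖v‖) :=
          (IsSelfAdjoint.of_nonneg hu).le_algebraMap_norm_self.trans (hmono (le_max_left _ _))

lemma IsSelfAdjoint.norm_add_smul_one_sq_le {b : E} (hb : IsSelfAdjoint b) (n : ℝ) :
    ‖b + (n * I) • (1 : E)‖ ^ 2 ≤ ‖b‖ ^ 2 + n ^ 2 := by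
  have hstar : star (b + (n * I) • (1 : E)) * (b + (n * I) • (1 : E)) =
      b * b + ((n : ℂ) ^ 2) • (1 : E) := by
    have hconj : star ((n : ℂ) * I) = -((n : ℂ) * I) := by simp
    have hsq : (n * I) * (n * I) = -(n : ℂ) ^ 2 := by ring_nf; simp
    rw [star_add, hb.star_eq, star_smul, star_one, hconj]
    simp only [add_mul, mul_add, neg_smul, neg_mul, smul_one_mul, mul_smul_one, smul_add, smul_neg,
      smul_smul, hsq, neg_neg]
    abel
  have hnorm : ‖((n : ℂ) ^ 2) • (1 : E)‖ ≤ n ^ 2 := by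
    obtain _ | _ := subsingleton_or_nontrivial E
    · simp [Subsingleton.elim (1 : E) 0, sq_nonneg]
    · rw [norm_smul, norm_one, mul_one, norm_pow, Complex.norm_real, Real.norm_eq_abs, sq_abs]
  calc ‖b + (n * I) • (1 : E)‖ ^ 2 = ‖b * b + ((n : ℂ) ^ 2) • (1 : E)‖ := by
        rw [← hstar, CStarRing.norm_star_mul_self, sq]
    _ ≤ ‖b * b‖ + ‖((n : ℂ) ^ 2) • (1 : E)‖ := norm_add_le _ _
    _ ≤ ‖b‖ ^ 2 + n ^ 2 := add_le_add (sq ‖b‖ ▸ norm_mul_le b b) hnorm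

lemma ContinuousLinearMap.im_apply_eq_zero_of_isSelfAdjoint {g : E →L[ℂ] ℂ} (hg : ‖g‖ ≤ 1)
    (hg1 : g 1 = 1) {b : E} (hb : IsSelfAdjoint b) : (g b).im = 0 := by
  have key : ∀ n : ℝ, 2 * (g b).im * n ≤ ‖b‖ ^ 2 := by
    intro n
    have hle : ‖g b + n * I‖ ^ 2 ≤ ‖b‖ ^ 2 + n ^ 2 := by
      have happly : g (b + (n * I) • (1 : E)) = g b + n * I := by simp [hg1]
      calc ‖g b + n * I‖ ^ 2 ≤ ‖b + (n * I) • (1 : E)‖ ^ 2 := by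
            rw [← happly]
            gcongr
            simpa using g.le_of_opNorm_le hg (b + (n * I) • (1 : E))
        _ ≤ ‖b‖ ^ 2 + n ^ 2 := hb.norm_add_smul_one_sq_le n
    rw [Complex.sq_norm, Complex.normSq_apply] at hle
    simp only [add_re, add_im, mul_re, mul_im, ofReal_re, ofReal_im, I_re, I_im] at hle
    nlinarith [sq_nonneg (g b).re]
  by_contra him
  have := key ((‖b‖ ^ 2 + 1) / (2 * (g b).im))
  rw [mul_div_cancel₀ _ (by simpa using him)] at this
  linarith

lemma ContinuousLinearMap.nonneg_apply_star_mul_self {g : E →L[ℂ] ℂ} (hg : ‖g‖ ≤ 1)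
    (hg1 : g 1 = 1) (c : E) : 0 ≤ g (star c * c) := by
  let _ := CStarAlgebra.spectralOrder E
  have _ := CStarAlgebra.spectralOrderedRing E
  have : Nontrivial E := nontrivial_of_ne 1 0 fun h ↦ by simp [h] at hg1
  set r := ‖star c * c‖
  have hdist : ‖(r : ℂ) - g (star c * c)‖ ≤ r := by
    have happly : (r : ℂ) - g (star c * c) = g (algebraMap ℝ E r - star c * c) := by
      simp [Algebra.algebraMap_eq_smul_one, hg1]
    calc ‖(r : ℂ) - g (star c * c)‖ ≤ ‖algebraMap ℝ E r - star c * c‖ := by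
          simpa [happly] using g.le_of_opNorm_le hg (algebraMap ℝ E r - star c * c)
      _ ≤ max ‖algebraMap ℝ E r‖ r :=
          norm_sub_le_max_of_nonneg (algebraMap_nonneg E (norm_nonneg _)) (star_mul_self_nonneg c)
      _ = r := by simp [norm_algebraMap', r]
  rw [Complex.nonneg_iff]
  refine ⟨?_, (g.im_apply_eq_zero_of_isSelfAdjoint hg hg1 (.star_mul_self c)).symm⟩
  have := (abs_re_le_norm _).trans hdist
  rw [sub_re, ofReal_re, abs_le] at this
  linarith

lemma exists_apply_one_eq_one_apply_eq_one_of_one_mem_spectrum {z : E} (hz : ‖z‖ ≤ 1)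
    (h1 : (1 : ℝ) ∈ spectrum ℝ z) : ∃ g : E →L[ℂ] ℂ, ‖g‖ ≤ 1 ∧ g 1 = 1 ∧ g z = 1 := by
  have : Nontrivial E := (subsingleton_or_nontrivial E).resolve_left fun _ ↦ by
    simp [spectrum.of_subsingleton] at h1
  have hnorm : ‖1 + z‖ = 2 := by
    refine le_antisymm ((norm_add_le _ _).trans (by rw [norm_one]; linarith)) ?_
    have h2 : (1 + 1 : ℝ) ∈ spectrum ℝ (algebraMap ℝ E 1 + z) := spectrum.add_mem_add_iff.mpr h1
    rw [map_one] at h2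
    simpa [one_add_one_eq_two] using spectrum.norm_le_norm_of_mem h2
  obtain ⟨g, hg, hg2⟩ := exists_dual_vector'' ℂ (1 + z)
  have hbound : ∀ x : E, ‖x‖ ≤ 1 → ‖g x‖ ≤ 1 := fun x hx ↦
    (g.le_of_opNorm_le hg x).trans (by rwa [one_mul])
  obtain ⟨hg1, hgz⟩ : g 1 = 1 ∧ g z = 1 := by
    rw [map_add, hnorm] at hg2
    exact Complex.eq_one_of_add_eq_two hg2 (hbound 1 norm_one.le) (hbound z hz)
  exact ⟨g, hg, hg1, hgz⟩

end Unital

lemma norm_star_mul_self_sub_star_mul_self_le {B : Type*} [NonUnitalCStarAlgebra B] (c d : B) :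
    ‖star c * c - star d * d‖ ≤ max ‖star c * c‖ ‖star d * d‖ := by
  let _ := CStarAlgebra.spectralOrder (Unitization ℂ B)
  have _ := CStarAlgebra.spectralOrderedRing (Unitization ℂ B)
  simpa [← Unitization.inr_star, ← Unitization.inr_mul, ← Unitization.inr_sub, Unitization.norm_inr]
    using norm_sub_le_max_of_nonneg (star_mul_self_nonneg (c : Unitization ℂ B))
      (star_mul_self_nonneg (d : Unitization ℂ B))

section NonUnital
variable {A : Type*} [NonUnitalCStarAlgebra A]

lemma IsSelfAdjoint.mul_self_eq_smul {a : A} (ha : IsSelfAdjoint a) {t : ℝ}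
    (h : ∀ x ∈ quasispectrum ℝ a, x = 0 ∨ x = t) : a * a = t • a := by
  calc a * a = cfcₙ (fun x : ℝ ↦ x * x) a := by rw [cfcₙ_mul _ _ a, cfcₙ_id' ℝ a]
    _ = cfcₙ (fun x : ℝ ↦ t * x) a := cfcₙ_congr fun x hx ↦ by rcases h x hx with rfl | rfl <;> simp
    _ = t • a := by rw [cfcₙ_const_mul t _ a, cfcₙ_id' ℝ a]

lemma exists_smul_eq_of_isIdempotentElem
    (hA : ∀ a : A, IsSelfAdjoint a → ∃ t : ℝ, a * a = t • a) {p q : A}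
    (hp : IsSelfAdjoint p) (hq : IsSelfAdjoint q) (hpp : IsIdempotentElem p)
    (hqq : IsIdempotentElem q) (hq0 : q ≠ 0) :
    ∃ r : ℝ, p = r • q := by
  obtain ⟨t, ht⟩ := hA (p + q) (hp.add hq)
  obtain ⟨u, hu⟩ := hA (p - q) (hp.sub hq)
  have hlin : (t + u - 2) • p = (2 - t + u) • q := by
    have : (p + q) * (p + q) + (p - q) * (p - q) = (2 : ℝ) • p + (2 : ℝ) • q := by
      simp only [add_mul, mul_add, sub_mul, mul_sub, hpp.eq, hqq.eq, two_smul]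
      abel
    rw [ht, hu] at this
    linear_combination (norm := module) this
  by_cases hc : t + u - 2 = 0
  · have hd : 2 - t + u = 0 := by
      rw [hc, zero_smul] at hlin
      exact (smul_eq_zero.mp hlin.symm).resolve_right hq0
    have hpq : (p - q) * (p - q) = 0 := by rw [hu, show u = 0 by linarith, zero_smul]
    exact ⟨1, by rw [one_smul, ← sub_eq_zero]; exact (hp.sub hq).eq_zero_of_mul_self_eq_zero hpq⟩
  · exact ⟨(t + u - 2)⁻¹ * (2 - t + u), by
      rw [mul_smul, ← hlin, smul_smul, inv_mul_cancel₀ hc, one_smul]⟩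

lemma exists_smul_eq_of_isSelfAdjoint
    (hA : ∀ a : A, IsSelfAdjoint a → ∃ t : ℝ, a * a = t • a) {x y : A}
    (hx : IsSelfAdjoint x) (hy : IsSelfAdjoint y) (hy0 : y ≠ 0) : ∃ r : ℝ, x = r • y := by
  rcases eq_or_ne x 0 with rfl | hx0
  · exact ⟨0, by simp⟩
  obtain ⟨α, hα⟩ := hA x hx
  obtain ⟨β, hβ⟩ := hA y hy
  have hα0 : α ≠ 0 := by rintro rfl; exact hx0 (hx.eq_zero_of_mul_self_eq_zero (by simpa using hα))
  have hβ0 : β ≠ 0 := by rintro rfl; exact hy0 (hy.eq_zero_of_mul_self_eq_zero (by simpa using hβ))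
  obtain ⟨r, hr⟩ := exists_smul_eq_of_isIdempotentElem hA ((IsSelfAdjoint.all α⁻¹).smul hx)
    ((IsSelfAdjoint.all β⁻¹).smul hy) (isIdempotentElem_inv_smul_of_mul_self_eq_smul hα)
    (isIdempotentElem_inv_smul_of_mul_self_eq_smul hβ) (smul_ne_zero (inv_ne_zero hβ0) hy0)
  refine ⟨α * r * β⁻¹, ?_⟩
  rw [mul_smul, mul_smul, ← hr, smul_smul, mul_inv_cancel₀ hα0, one_smul]

lemma rank_le_one_of_forall_mul_self_eq_smul
    (hA : ∀ a : A, IsSelfAdjoint a → ∃ t : ℝ, a * a = t • a) : Module.rank ℂ A ≤ 1 := by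
  rw [rank_le_one_iff]
  by_cases hzero : ∀ y : A, IsSelfAdjoint y → y = 0
  · refine ⟨0, fun v ↦ ⟨0, ?_⟩⟩
    rw [← realPart_add_I_smul_imaginaryPart v, hzero _ (ℜ v).2, hzero _ (ℑ v).2]
    simp
  push Not at hzero
  obtain ⟨y, hy, hy0⟩ := hzero
  refine ⟨y, fun v ↦ ?_⟩
  obtain ⟨r₁, hr₁⟩ := exists_smul_eq_of_isSelfAdjoint hA (ℜ v).2 hy hy0
  obtain ⟨r₂, hr₂⟩ := exists_smul_eq_of_isSelfAdjoint hA (ℑ v).2 hy hy0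
  refine ⟨r₁ + I * r₂, ?_⟩
  rw [← realPart_add_I_smul_imaginaryPart v, hr₁, hr₂, add_smul, mul_smul, Complex.coe_smul,
    Complex.coe_smul]

lemma exists_isSelfAdjoint_two_nonzero_mem_quasispectrum (hdim : 2 ≤ Module.rank ℂ A) :
    ∃ a : A, IsSelfAdjoint a ∧ ∃ s ∈ quasispectrum ℝ a, ∃ t ∈ quasispectrum ℝ a,
      s ≠ 0 ∧ t ≠ 0 ∧ s ≠ t := by
  by_contra! hA
  suffices Module.rank ℂ A ≤ 1 from absurd (hdim.trans this) (by norm_num)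
  refine rank_le_one_of_forall_mul_self_eq_smul fun a ha ↦ ?_
  by_cases hnz : ∃ t ∈ quasispectrum ℝ a, t ≠ 0
  · obtain ⟨t, ht, ht0⟩ := hnz
    refine ⟨t, ha.mul_self_eq_smul fun x hx ↦ or_iff_not_imp_left.mpr fun hx0 ↦ ?_⟩
    exact hA a ha x hx t ht hx0 ht0
  · push Not at hnz
    exact ⟨0, ha.mul_self_eq_smul fun x hx ↦ .inl (hnz x hx)⟩

lemma IsSelfAdjoint.exists_norm_le_one_one_mem_quasispectrum {a : A} (ha : IsSelfAdjoint a)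
    {s t : ℝ} (hs : s ∈ quasispectrum ℝ a) (ht : t ∈ quasispectrum ℝ a)
    (hs0 : s ≠ 0) (ht0 : t ≠ 0) (hst : s ≠ t) :
    ∃ z : A, ‖z‖ ≤ 1 ∧ (1 : ℝ) ∈ quasispectrum ℝ z ∧ (1 : ℝ) ∈ quasispectrum ℝ (-z) := by
  obtain ⟨f, hf, hf0, hfs, hft, hf1⟩ := exists_continuous_abs_le_one_eq_one_eq_neg_one hs0 ht0 hst
  refine ⟨cfcₙ f a, norm_cfcₙ_le fun x _ ↦ hf1 x, ?_, ?_⟩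
  · rw [cfcₙ_map_quasispectrum f a]
    exact ⟨s, hs, hfs⟩
  · rw [← cfcₙ_neg f a, cfcₙ_map_quasispectrum (fun x ↦ -f x) a]
    exact ⟨t, ht, by simp [hft]⟩

lemma exists_positive_functional_apply_eq_one {z : A} (hz : ‖z‖ ≤ 1)
    (h1 : (1 : ℝ) ∈ quasispectrum ℝ z) :
    ∃ φ : A →L[ℂ] ℂ, ‖φ‖ ≤ 1 ∧ (∀ c, 0 ≤ φ (star c * c)) ∧ φ z = 1 := by
  rw [Unitization.quasispectrum_eq_spectrum_inr' ℝ ℂ z] at h1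
  obtain ⟨g, hg, hg1, hgz⟩ :=
    exists_apply_one_eq_one_apply_eq_one_of_one_mem_spectrum (by rwa [Unitization.norm_inr]) h1
  refine ⟨(g.toLinearMap.comp (Unitization.inrHom ℂ ℂ A)).mkContinuous 1 fun x ↦ ?_,
    LinearMap.mkContinuous_norm_le _ zero_le_one _, fun c ↦ ?_, hgz⟩
  · simpa [Unitization.norm_inr] using g.le_of_opNorm_le hg (x : Unitization ℂ A)
  · simpa [Unitization.inr_mul, Unitization.inr_star] using g.nonneg_apply_star_mul_self hg hg1 c

lemma exists_positive_functionals_two_le_norm_sub (hdim : 2 ≤ Module.rank ℂ A) :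
    ∃ φ ψ : A →L[ℂ] ℂ, (∀ c, 0 ≤ φ (star c * c)) ∧ (∀ c, 0 ≤ ψ (star c * c)) ∧
      ‖φ‖ ≤ 1 ∧ ‖ψ‖ ≤ 1 ∧ 2 ≤ ‖φ - ψ‖ := by
  obtain ⟨a, ha, s, hs, t, ht, hs0, ht0, hst⟩ :=
    exists_isSelfAdjoint_two_nonzero_mem_quasispectrum hdim
  obtain ⟨z, hz, hz1, hz1'⟩ := ha.exists_norm_le_one_one_mem_quasispectrum hs ht hs0 ht0 hst
  obtain ⟨φ, hφ, hφpos, hφz⟩ := exists_positive_functional_apply_eq_one hz hz1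
  obtain ⟨ψ, hψ, hψpos, hψz⟩ := exists_positive_functional_apply_eq_one (by rwa [norm_neg]) hz1'
  refine ⟨φ, ψ, hφpos, hψpos, hφ, hψ, ?_⟩
  have hsep : (φ - ψ) z = 2 := by
    rw [map_neg] at hψz
    rw [sub_apply, hφz, neg_eq_iff_eq_neg.mp hψz]
    norm_num
  calc (2 : ℝ) = ‖(φ - ψ) z‖ := by simp [hsep]
    _ ≤ ‖φ - ψ‖ * ‖z‖ := (φ - ψ).le_opNorm z
    _ ≤ ‖φ - ψ‖ := mul_le_of_le_one_right (norm_nonneg _) hz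

end NonUnital

/-- If `A` is a C*-algebra of complex dimension at least 2, then there is no
isometric positive `ℂ`-linear map from the dual `A'` (with its usual cone of positive
functionals) into any C*-algebra `B`.  Positivity in a C*-algebra is the canonical one:
`b ≥ 0` iff `b = c* c` for some `c`. -/
theorem no_positive_isometry_from_dual_of_cstarAlgebra
    (A : Type*) [NonUnitalCStarAlgebra A] (hdim : 2 ≤ Module.rank ℂ A)
    (B : Type*) [NonUnitalCStarAlgebra B] :
    ¬ ∃ T : (A →L[ℂ] ℂ) →ₗ[ℂ] B,
        (∀ φ : A →L[ℂ] ℂ, ‖T φ‖ = ‖φ‖) ∧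
        (∀ φ : A →L[ℂ] ℂ,
          (∀ a : A, (∃ c : A, a = star c * c) → ∃ r : ℝ, 0 ≤ r ∧ φ a = (r : ℂ)) →
          ∃ c : B, T φ = star c * c) := by
  rintro ⟨T, hiso, hpos⟩
  have hreal : ∀ χ : A →L[ℂ] ℂ, (∀ c, 0 ≤ χ (star c * c)) →
      ∀ a : A, (∃ c : A, a = star c * c) → ∃ r : ℝ, 0 ≤ r ∧ χ a = (r : ℂ) := by
    rintro χ hχ _ ⟨c, rfl⟩
    obtain ⟨r, hr, hrχ⟩ := RCLike.nonneg_iff_exists_ofReal.mp (hχ c)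
    exact ⟨r, hr, hrχ.symm⟩
  obtain ⟨φ, ψ, hφ, hψ, hφ1, hψ1, h2⟩ := exists_positive_functionals_two_le_norm_sub hdim
  obtain ⟨c, hc⟩ := hpos φ (hreal φ hφ)
  obtain ⟨d, hd⟩ := hpos ψ (hreal ψ hψ)
  have := norm_star_mul_self_sub_star_mul_self_le c d
  rw [← hc, ← hd, ← map_sub, hiso, hiso, hiso] at this
  linarith [max_le hφ1 hψ1]
end

section
/- Let B be a C*-algebra and S ⊆ B a closed linear subspace such that the set S ∩ B₊ of positive elements of B lying in S has dense linear span in S. Let A be the smallest closed linear subspace of B containing S that is closed under the ternary product (x, y, z) ↦ x y* z (the closed subTRO of B generated by S). Then A is a C*-subalgebra of B: A is closed under multiplication and under the adjoint operation; moreover, A equals the smallest closed *-subalgebra of B containing S. -/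
/-!
Call `b` a right multiplier of `A` if `A * b ⊆ A`. For a positive `p` in a closed subTRO `A`,
`p * p = star p * p` is a right multiplier, and so is its adjoint; right multipliers whose
adjoints are also right multipliers form a closed *-subalgebra, which therefore contains
`p = √(p * p)`. Hence the positive part of `S` consists of right multipliers, and by density and
minimality so does all of `A`, i.e. `A * A ⊆ A`. Likewise `star A` is a closed subTRO containing
the (self-adjoint) positive part of `S`, so `A ⊆ star A`. A closed *-subalgebra is a subTRO,
which gives minimality among *-subalgebras.
-/

namespace Submodule

section

variable {R B : Type*} [CommSemiring R] [NonUnitalSemiring B] [Module R B]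

section RightMultipliers

variable [SMulCommClass R B B]

def rightMultipliers (A : Submodule R B) : Submodule R B where
  carrier := {b | ∀ x ∈ A, x * b ∈ A}
  add_mem' ha hb x hx := by simpa only [mul_add] using add_mem (ha x hx) (hb x hx)
  zero_mem' x _ := by simp
  smul_mem' r b hb x hx := by simpa only [mul_smul_comm] using A.smul_mem r (hb x hx)

theorem mem_rightMultipliers {A : Submodule R B} {b : B} :
    b ∈ A.rightMultipliers ↔ ∀ x ∈ A, x * b ∈ A :=
  Iff.rfl

theorem isClosed_rightMultipliers [TopologicalSpace B] [IsTopologicalSemiring B]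
    {A : Submodule R B} (hA : IsClosed (A : Set B)) : IsClosed (A.rightMultipliers : Set B) := by
  have : (A.rightMultipliers : Set B) = ⋂ x ∈ A, (x * ·) ⁻¹' A := by ext; simp [mem_rightMultipliers]
  exact this ▸ isClosed_biInter fun x _ => hA.preimage (continuous_const_mul x)

end RightMultipliers

variable [StarRing B]

def IsSubTRO (A : Submodule R B) : Prop :=
  ∀ x ∈ A, ∀ y ∈ A, ∀ z ∈ A, x * star y * z ∈ A

theorem IsSubTRO.inf_rightMultipliers [SMulCommClass R B B] {A : Submodule R B}
    (hA : A.IsSubTRO) : (A ⊓ A.rightMultipliers).IsSubTRO := by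
  rintro x ⟨hxA, hxM⟩ y ⟨hyA, -⟩ z ⟨hzA, -⟩
  refine ⟨hA x hxA y hyA z hzA, fun w hw => ?_⟩
  simpa only [mul_assoc] using hA _ (hxM w hw) y hyA z hzA

variable [StarRing R] [StarModule R B]

def starComap (A : Submodule R B) : Submodule R B :=
  A.comap (starLinearEquiv R (A := B)).toLinearMap

theorem mem_starComap {A : Submodule R B} {b : B} : b ∈ A.starComap ↔ star b ∈ A :=
  Iff.rfl

theorem isClosed_starComap [TopologicalSpace B] [ContinuousStar B] {A : Submodule R B}
    (hA : IsClosed (A : Set B)) : IsClosed (A.starComap : Set B) :=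
  hA.preimage continuous_star

theorem IsSubTRO.starComap {A : Submodule R B} (hA : A.IsSubTRO) : A.starComap.IsSubTRO := by
  intro x hx y hy z hz
  simpa [mem_starComap, mul_assoc] using
    hA _ (mem_starComap.1 hz) _ (mem_starComap.1 hy) _ (mem_starComap.1 hx)

variable [SMulCommClass R B B]

def starRightMultipliers (A : Submodule R B) : NonUnitalStarSubalgebra R B where
  __ := A.rightMultipliers ⊓ A.rightMultipliers.starComap
  mul_mem' {a b} := by
    rintro ⟨ha, ha' : ∀ x ∈ A, x * star a ∈ A⟩ ⟨hb, hb' : ∀ x ∈ A, x * star b ∈ A⟩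
    refine ⟨fun x hx => ?_, fun x hx => ?_⟩
    · simpa only [mul_assoc] using hb _ (ha x hx)
    · show x * star (a * b) ∈ A
      simpa only [star_mul, ← mul_assoc] using ha' _ (hb' x hx)
  star_mem' {a} := by
    rintro ⟨ha, ha'⟩
    exact ⟨ha', show star (star a) ∈ A.rightMultipliers by rwa [star_star]⟩

theorem mem_starRightMultipliers {A : Submodule R B} {b : B} :
    b ∈ A.starRightMultipliers ↔ b ∈ A.rightMultipliers ∧ star b ∈ A.rightMultipliers :=
  Iff.rfl

theorem isClosed_starRightMultipliers [TopologicalSpace B] [IsTopologicalSemiring B]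
    [ContinuousStar B] {A : Submodule R B} (hA : IsClosed (A : Set B)) :
    IsClosed (A.starRightMultipliers : Set B) :=
  (isClosed_rightMultipliers hA).inter (isClosed_starComap (isClosed_rightMultipliers hA))

end

theorem IsSubTRO.mem_rightMultipliers_of_nonneg {B : Type*} [NonUnitalCStarAlgebra B]
    [PartialOrder B] [StarOrderedRing B] {A : Submodule ℂ B} (hA : A.IsSubTRO)
    (hAc : IsClosed (A : Set B)) {p : B} (hpA : p ∈ A) (hp : 0 ≤ p) :
    p ∈ A.rightMultipliers := by
  have hp_sa : IsSelfAdjoint p := .of_nonneg hp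
  have hpp : p * p ∈ A.rightMultipliers := fun x hx => by
    simpa only [hp_sa.star_eq, mul_assoc] using hA x hx p hpA p hpA
  have hpp_star : p * p ∈ A.starRightMultipliers :=
    mem_starRightMultipliers.2 ⟨hpp, by rwa [star_mul, hp_sa.star_eq]⟩
  have hsqrt : cfcₙ Real.sqrt (p * p) = p := by
    rw [← CFC.sqrt_eq_real_sqrt (p * p) (by simpa [hp_sa.star_eq] using star_mul_self_nonneg p),
      CFC.sqrt_mul_self p]
  have hp_mem := cfcₙ_mem (𝕜' := ℂ) (hs := isClosed_starRightMultipliers hAc) Real.sqrt hpp_star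
  exact (mem_starRightMultipliers.1 (hsqrt ▸ hp_mem)).1

end Submodule

theorem subTRO_generated_by_positively_spanned_subspace_is_cstarSubalgebra_general
    (B : Type*) [NonUnitalCStarAlgebra B] (S A : Submodule ℂ B)
    (hSdense : S ≤ (Submodule.span ℂ
      ((S : Set B) ∩ {x : B | ∃ c : B, x = star c * c})).topologicalClosure)
    (hAclosed : IsClosed (A : Set B))
    (hSA : S ≤ A)
    (hATRO : ∀ x ∈ A, ∀ y ∈ A, ∀ z ∈ A, x * star y * z ∈ A)
    (hAmin : ∀ C : Submodule ℂ B, IsClosed (C : Set B) → S ≤ C →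
      (∀ x ∈ C, ∀ y ∈ C, ∀ z ∈ C, x * star y * z ∈ C) → A ≤ C) :
    (∀ x ∈ A, ∀ y ∈ A, x * y ∈ A) ∧
    (∀ x ∈ A, star x ∈ A) ∧
    (∀ C : Submodule ℂ B, IsClosed (C : Set B) → S ≤ C →
      (∀ x ∈ C, ∀ y ∈ C, x * y ∈ C) → (∀ x ∈ C, star x ∈ C) → A ≤ C) := by
  -- `B` carries no order of its own; under the spectral order `star c * c` is nonnegative.
  let _ := CStarAlgebra.spectralOrder B
  have _ := CStarAlgebra.spectralOrderedRing B
  have hTRO : A.IsSubTRO := hATRO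
  have hS_le {C : Submodule ℂ B} (hC : IsClosed (C : Set B))
      (hP : ∀ p ∈ S, 0 ≤ p → p ∈ C) : S ≤ C := by
    refine hSdense.trans (Submodule.topologicalClosure_minimal _ (Submodule.span_le.2 ?_) hC)
    rintro _ ⟨hpS, c, rfl⟩
    exact hP _ hpS (star_mul_self_nonneg c)
  have hstar : A ≤ A.starComap := hAmin _ (Submodule.isClosed_starComap hAclosed)
    (hS_le (Submodule.isClosed_starComap hAclosed) fun p hpS hp => by
      rw [Submodule.mem_starComap, (IsSelfAdjoint.of_nonneg hp).star_eq]; exact hSA hpS)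
    hTRO.starComap
  have hM : IsClosed ((A ⊓ A.rightMultipliers : Submodule ℂ B) : Set B) :=
    hAclosed.inter (Submodule.isClosed_rightMultipliers hAclosed)
  have hmul : A ≤ A ⊓ A.rightMultipliers := hAmin _ hM
    (hS_le hM fun p hpS hp =>
      ⟨hSA hpS, hTRO.mem_rightMultipliers_of_nonneg hAclosed (hSA hpS) hp⟩)
    hTRO.inf_rightMultipliers
  refine ⟨fun x hx y hy => (hmul hy).2 x hx, fun x hx => hstar hx, ?_⟩
  intro C hC hSC hCmul hCstar
  exact hAmin C hC hSC fun x hx y hy z hz => hCmul _ (hCmul x hx _ (hCstar y hy)) z hz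

/-- Let `B` be a C*-algebra and `S` a closed subspace of `B` whose positive part
`S ∩ B₊` has dense linear span in `S`.  If `A` is the smallest closed subTRO of `B`
containing `S` (i.e. the closed subTRO generated by `S`), then `A` is a C*-subalgebra of `B`:
it is closed under multiplication and adjoints, and it equals the smallest closed
*-subalgebra of `B` containing `S` (being itself a closed *-subalgebra containing `S`, and
contained in every other one). -/
theorem subTRO_generated_by_positively_spanned_subspace_is_cstarSubalgebra
    (B : Type*) [NonUnitalCStarAlgebra B] (S A : Submodule ℂ B)
    (hSclosed : IsClosed (S : Set B))
    (hSdense : S ≤ (Submodule.span ℂ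
      ((S : Set B) ∩ {x : B | ∃ c : B, x = star c * c})).topologicalClosure)
    (hAclosed : IsClosed (A : Set B))
    (hSA : S ≤ A)
    (hATRO : ∀ x ∈ A, ∀ y ∈ A, ∀ z ∈ A, x * star y * z ∈ A)
    (hAmin : ∀ C : Submodule ℂ B, IsClosed (C : Set B) → S ≤ C →
      (∀ x ∈ C, ∀ y ∈ C, ∀ z ∈ C, x * star y * z ∈ C) → A ≤ C) :
    (∀ x ∈ A, ∀ y ∈ A, x * y ∈ A) ∧
    (∀ x ∈ A, star x ∈ A) ∧
    (∀ C : Submodule ℂ B, IsClosed (C : Set B) → S ≤ C →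
      (∀ x ∈ C, ∀ y ∈ C, x * y ∈ C) → (∀ x ∈ C, star x ∈ C) → A ≤ C) :=
  subTRO_generated_by_positively_spanned_subspace_is_cstarSubalgebra_general B S A hSdense hAclosed
    hSA hATRO hAmin
end

section
/- Let B be a C*-algebra and A ⊆ B a *-subTRO, i.e., a closed linear subspace with a* ∈ A for all a ∈ A and x y* z ∈ A for all x, y, z ∈ A. If x ∈ A and x ≥ 0 in B, then x belongs to the closed linear span in B of the set of products {a b : a, b ∈ A}. -/
/-!
Being positive, `x` is the square root of `x * x`, so it lies in the closure of the
*-algebra generated by `x * x`. For a *-subTRO `A`, the products `a * b` with `a, b ∈ A` form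
a star-closed subsemigroup, since `(a * b) * (c * d) = (a * star (star b) * c) * d`; it contains
`x * x`, so that *-algebra lies in its linear span.
-/

section StarTRO

variable {B : Type*} [Semigroup B] [StarMul B] {A : Set B}
  (hAstar : ∀ a ∈ A, star a ∈ A) (hATRO : ∀ x ∈ A, ∀ y ∈ A, ∀ z ∈ A, x * star y * z ∈ A)

def Subsemigroup.mulSelfOfStarTRO : Subsemigroup B where
  carrier := {x | ∃ a ∈ A, ∃ b ∈ A, x = a * b}
  mul_mem' := by
    rintro _ _ ⟨a, ha, b, hb, rfl⟩ ⟨c, hc, d, hd, rfl⟩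
    refine ⟨a * b * c, ?_, d, hd, by simp only [mul_assoc]⟩
    simpa only [star_star] using hATRO a ha (star b) (hAstar b hb) c hc

lemma Subsemigroup.star_mem_mulSelfOfStarTRO :
    ∀ x ∈ mulSelfOfStarTRO hAstar hATRO, star x ∈ mulSelfOfStarTRO hAstar hATRO := by
  rintro _ ⟨a, ha, b, hb, rfl⟩
  exact ⟨star b, hAstar b hb, star a, hAstar a ha, star_mul a b⟩

end StarTRO

lemma NonUnitalStarAlgebra.adjoin_le_span_of_subset {R A : Type*} [CommSemiring R] [StarRing R]
    [NonUnitalSemiring A] [StarRing A] [Module R A] [IsScalarTower R A A] [SMulCommClass R A A]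
    [StarModule R A] {P : Subsemigroup A} (hP : ∀ x ∈ P, star x ∈ P) {s : Set A}
    (hs : s ⊆ P) : (adjoin R s).toSubmodule ≤ Submodule.span R P := by
  rw [adjoin_eq_span]
  refine Submodule.span_mono (Subsemigroup.closure_le.mpr (Set.union_subset hs ?_))
  intro x hx
  simpa using hP _ (hs hx)

lemma NonUnitalStarAlgebra.elemental_real_subset_closure_span {B : Type*}
    [NonUnitalCStarAlgebra B] {P : Subsemigroup B} (hP : ∀ x ∈ P, star x ∈ P) {y : B}
    (hy : y ∈ P) :
    (elemental ℝ y : Set B) ⊆ (Submodule.span ℂ (P : Set B)).topologicalClosure := by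
  rw [Submodule.topologicalClosure_coe]
  exact closure_mono fun z hz ↦ Submodule.span_le_restrictScalars ℝ ℂ _
    (adjoin_le_span_of_subset hP (Set.singleton_subset_iff.mpr hy) hz)

lemma mem_elemental_mul_self_of_nonneg {A : Type*} [NonUnitalCStarAlgebra A] [PartialOrder A]
    [StarOrderedRing A] {x : A} (hx : 0 ≤ x) : x ∈ NonUnitalStarAlgebra.elemental ℝ (x * x) := by
  have := (range_cfcₙ_nnreal_subset (x * x) hx.isSelfAdjoint.mul_self_nonneg ⟨NNReal.sqrt, rfl⟩).1
  change CFC.sqrt (x * x) ∈ _ at this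
  rwa [CFC.sqrt_mul_self x] at this

theorem positive_elem_of_star_subTRO_mem_closedSpan_sq_general
    (B : Type*) [NonUnitalCStarAlgebra B] (A : Submodule ℂ B)
    (hAstar : ∀ a ∈ A, star a ∈ A)
    (hATRO : ∀ x ∈ A, ∀ y ∈ A, ∀ z ∈ A, x * star y * z ∈ A)
    (x : B) (hxA : x ∈ A) (hxpos : ∃ c : B, x = star c * c) :
    x ∈ (Submodule.span ℂ {x : B | ∃ a ∈ A, ∃ b ∈ A, x = a * b}).topologicalClosure := by
  -- `B` has no order instance: use the spectral order, whose nonnegative elements are the `star c * c`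
  let _ : PartialOrder B := CStarAlgebra.spectralOrder B
  have := CStarAlgebra.spectralOrderedRing B
  obtain ⟨c, hc⟩ := hxpos
  have hx : 0 ≤ x := hc ▸ star_mul_self_nonneg c
  let P := Subsemigroup.mulSelfOfStarTRO (A := (A : Set B)) hAstar hATRO
  have hxxP : x * x ∈ P := ⟨x, hxA, x, hxA, rfl⟩
  exact NonUnitalStarAlgebra.elemental_real_subset_closure_span
    (Subsemigroup.star_mem_mulSelfOfStarTRO hAstar hATRO) hxxP
    (mem_elemental_mul_self_of_nonneg hx)

/-- If `A` is a *-subTRO of a C*-algebra `B` (a closed subspace, closed under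
adjoints and under the ternary product `x y* z`), and `x ∈ A` is positive in `B`
(`x = c* c` for some `c ∈ B`), then `x` lies in the closed linear span of the products
`{a b : a, b ∈ A}`. -/
theorem positive_elem_of_star_subTRO_mem_closedSpan_sq
    (B : Type*) [NonUnitalCStarAlgebra B] (A : Submodule ℂ B)
    (hAclosed : IsClosed (A : Set B))
    (hAstar : ∀ a ∈ A, star a ∈ A)
    (hATRO : ∀ x ∈ A, ∀ y ∈ A, ∀ z ∈ A, x * star y * z ∈ A)
    (x : B) (hxA : x ∈ A) (hxpos : ∃ c : B, x = star c * c) :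
    x ∈ (Submodule.span ℂ {x : B | ∃ a ∈ A, ∃ b ∈ A, x = a * b}).topologicalClosure :=
  positive_elem_of_star_subTRO_mem_closedSpan_sq_general B A hAstar hATRO x hxA hxpos
end

section
/- Let H be a complex Hilbert space, X a linear subspace of B(H), and τ : X → X a conjugate-linear involution (τ(τ(x)) = x for all x) satisfying ‖[τ(x_{ji})]‖ = ‖[x_{ij}]‖ for every n ∈ ℕ and every n×n matrix [x_{ij}] with entries in X, where the norms are those of Mₙ(B(H)) with its C*-norm. Then the map Φ : X → M₂(B(H)) defined by Φ(x) = [[0, x],[τ(x)*, 0]] is a ℂ-linear complete isometry (for every n, the entrywise amplification Mₙ(X) → Mₙ(M₂(B(H))) is isometric for the C*-matrix norms), its range Φ(X) is a selfadjoint subspace of the C*-algebra M₂(B(H)), and Φ(τ(x)) = Φ(x)* for all x ∈ X. -/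
/-!
The amplification `[Φ(x_ij)]` acts on `ℓ²(n; ℓ²(2; H)) ≅ ℓ²(n; H) ⊕ ℓ²(n; H)` as
`(u, v) ↦ ([x_ij] v, [τ(x_ij)*] u)`, so its norm is `max ‖[x_ij]‖ ‖[τ(x_ij)*]‖`. The second matrix
is the adjoint of `[τ(x_ji)]`, whose norm is `‖[x_ij]‖` by hypothesis; hence `Φ` is a complete
isometry. Linearity of `Φ` and `Φ(τ x) = Φ(x)*` are entrywise computations, the latter using
`τ ∘ τ = id`, and they make the range selfadjoint.
-/

/-- The bounded operator on the Hilbert space `ℓ²(Fin n; E)` associated to an `n × n` matrix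
of bounded operators on `E`. -/
noncomputable def Matrix.toCLM {E : Type*} [NormedAddCommGroup E] [InnerProductSpace ℂ E]
    {n : ℕ} (M : Matrix (Fin n) (Fin n) (E →L[ℂ] E)) :
    PiLp 2 (fun _ : Fin n => E) →L[ℂ] PiLp 2 (fun _ : Fin n => E) :=
  ((PiLp.continuousLinearEquiv 2 ℂ (fun _ : Fin n => E)).symm.toContinuousLinearMap.comp
    (ContinuousLinearMap.pi fun i => ∑ j, (M i j).comp (ContinuousLinearMap.proj j))).comp
    (PiLp.continuousLinearEquiv 2 ℂ (fun _ : Fin n => E)).toContinuousLinearMap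

/-- The canonical C*-norm of an `n × n` matrix of bounded operators on a Hilbert space `E`,
namely the operator norm of the associated operator on `ℓ²(Fin n; E)`. -/
noncomputable def Matrix.cstarNorm {E : Type*} [NormedAddCommGroup E] [InnerProductSpace ℂ E]
    {n : ℕ} (M : Matrix (Fin n) (Fin n) (E →L[ℂ] E)) : ℝ :=
  ‖M.toCLM‖

namespace PiLp

variable {E : Type*} {n : ℕ}

def interleave (u v : PiLp 2 (fun _ : Fin n => E)) :
    PiLp 2 (fun _ : Fin n => PiLp 2 (fun _ : Fin 2 => E)) :=
  WithLp.toLp 2 fun i => WithLp.toLp 2 ![u i, v i]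

lemma exists_eq_interleave (ξ : PiLp 2 (fun _ : Fin n => PiLp 2 (fun _ : Fin 2 => E))) :
    ∃ u v, ξ = interleave u v :=
  ⟨WithLp.toLp 2 fun i => ξ i 0, WithLp.toLp 2 fun i => ξ i 1, by
    ext i k
    fin_cases k <;> rfl⟩

lemma norm_sq_interleave [SeminormedAddCommGroup E] (u v : PiLp 2 (fun _ : Fin n => E)) :
    ‖interleave u v‖ ^ 2 = ‖u‖ ^ 2 + ‖v‖ ^ 2 := by
  simp only [interleave, norm_sq_eq_of_L2, Fin.sum_univ_two, Matrix.cons_val_zero,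
    Matrix.cons_val_one, Finset.sum_add_distrib]

lemma norm_interleave_zero_left [SeminormedAddCommGroup E] (v : PiLp 2 (fun _ : Fin n => E)) :
    ‖interleave 0 v‖ = ‖v‖ := by
  rw [← sq_eq_sq₀ (norm_nonneg _) (norm_nonneg _), norm_sq_interleave, norm_zero]
  ring

lemma norm_interleave_zero_right [SeminormedAddCommGroup E] (u : PiLp 2 (fun _ : Fin n => E)) :
    ‖interleave u 0‖ = ‖u‖ := by
  rw [← sq_eq_sq₀ (norm_nonneg _) (norm_nonneg _), norm_sq_interleave, norm_zero]
  ring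

end PiLp

namespace Matrix

variable {E : Type*} [NormedAddCommGroup E] [InnerProductSpace ℂ E] {n : ℕ}

lemma toCLM_apply (M : Matrix (Fin n) (Fin n) (E →L[ℂ] E)) (ξ : PiLp 2 (fun _ : Fin n => E))
    (i : Fin n) : M.toCLM ξ i = ∑ j, M i j (ξ j) := by
  simp [toCLM]

lemma toCLM_conjTranspose [CompleteSpace E] (M : Matrix (Fin n) (Fin n) (E →L[ℂ] E)) :
    Mᴴ.toCLM = ContinuousLinearMap.adjoint M.toCLM := by
  rw [ContinuousLinearMap.eq_adjoint_iff]
  intro ξ η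
  simp only [PiLp.inner_apply, toCLM_apply, conjTranspose_apply, sum_inner, inner_sum,
    ContinuousLinearMap.star_eq_adjoint, ContinuousLinearMap.adjoint_inner_left]
  exact Finset.sum_comm

lemma cstarNorm_conjTranspose [CompleteSpace E] (M : Matrix (Fin n) (Fin n) (E →L[ℂ] E)) :
    Mᴴ.cstarNorm = M.cstarNorm := by
  rw [cstarNorm, toCLM_conjTranspose, LinearIsometryEquiv.norm_map]
  rfl

lemma cstarNorm_nonneg (M : Matrix (Fin n) (Fin n) (E →L[ℂ] E)) : 0 ≤ M.cstarNorm :=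
  norm_nonneg M.toCLM

lemma toCLM_offDiag_interleave (P Q : Matrix (Fin n) (Fin n) (E →L[ℂ] E))
    (u v : PiLp 2 (fun _ : Fin n => E)) :
    (of fun i j => (!![0, P i j; Q i j, 0] : Matrix (Fin 2) (Fin 2) (E →L[ℂ] E)).toCLM).toCLM
        (PiLp.interleave u v) = PiLp.interleave (P.toCLM v) (Q.toCLM u) := by
  ext i k
  fin_cases k <;> simp [toCLM_apply, PiLp.interleave, Fin.sum_univ_two, WithLp.ofLp_sum]

lemma cstarNorm_offDiag (P Q : Matrix (Fin n) (Fin n) (E →L[ℂ] E)) :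
    (of fun i j => (!![0, P i j; Q i j, 0] : Matrix (Fin 2) (Fin 2) (E →L[ℂ] E)).toCLM).cstarNorm
      = max P.cstarNorm Q.cstarNorm := by
  set T := (of fun i j => (!![0, P i j; Q i j, 0] : Matrix (Fin 2) (Fin 2) (E →L[ℂ] E)).toCLM)
  have hm : 0 ≤ max P.cstarNorm Q.cstarNorm := P.cstarNorm_nonneg.trans (le_max_left _ _)
  refine le_antisymm (ContinuousLinearMap.opNorm_le_bound _ hm fun ξ => ?_)
    (max_le (ContinuousLinearMap.opNorm_le_bound _ T.cstarNorm_nonneg fun v => ?_)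
      (ContinuousLinearMap.opNorm_le_bound _ T.cstarNorm_nonneg fun u => ?_))
  · obtain ⟨u, v, rfl⟩ := PiLp.exists_eq_interleave ξ
    have hP := (P.toCLM.le_opNorm v).trans
      (mul_le_mul_of_nonneg_right (le_max_left P.cstarNorm Q.cstarNorm) (norm_nonneg v))
    have hQ := (Q.toCLM.le_opNorm u).trans
      (mul_le_mul_of_nonneg_right (le_max_right P.cstarNorm Q.cstarNorm) (norm_nonneg u))
    refine le_of_pow_le_pow_left₀ two_ne_zero (mul_nonneg hm (norm_nonneg _)) ?_
    rw [toCLM_offDiag_interleave, PiLp.norm_sq_interleave, mul_pow, PiLp.norm_sq_interleave,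
      mul_add, ← mul_pow, ← mul_pow, add_comm]
    gcongr
  · calc ‖P.toCLM v‖ = ‖T.toCLM (PiLp.interleave 0 v)‖ := by
          rw [toCLM_offDiag_interleave, map_zero, PiLp.norm_interleave_zero_right]
      _ ≤ ‖T.toCLM‖ * ‖v‖ := by
          simpa only [PiLp.norm_interleave_zero_left] using
            T.toCLM.le_opNorm (PiLp.interleave 0 v)
  · calc ‖Q.toCLM u‖ = ‖T.toCLM (PiLp.interleave u 0)‖ := by
          rw [toCLM_offDiag_interleave, map_zero, PiLp.norm_interleave_zero_left]
      _ ≤ ‖T.toCLM‖ * ‖u‖ := by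
          simpa only [PiLp.norm_interleave_zero_right] using
            T.toCLM.le_opNorm (PiLp.interleave u 0)

end Matrix

/-- Let `X ⊆ B(H)` be a subspace and `τ : X → X` a conjugate-linear involution
with `‖[τ(x_{ji})]‖ = ‖[x_{ij}]‖` for all matrices over `X` (C*-matrix norms).  Then
`Φ(x) = [[0, x], [τ(x)*, 0]] ∈ M₂(B(H))` is a `ℂ`-linear complete isometry, its range is a
selfadjoint subspace of `M₂(B(H))`, and `Φ(τ(x)) = Φ(x)*`. -/
theorem selfadjoint_embedding_of_involutive_operator_space
    {H : Type*} [NormedAddCommGroup H] [InnerProductSpace ℂ H] [CompleteSpace H]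
    (X : Submodule ℂ (H →L[ℂ] H)) (τ : X → X)
    (hadd : ∀ x y : X, τ (x + y) = τ x + τ y)
    (hsmul : ∀ (c : ℂ) (x : X), τ (c • x) = (starRingEnd ℂ c) • τ x)
    (hinvol : ∀ x : X, τ (τ x) = x)
    (hnorm : ∀ (n : ℕ) (M : Matrix (Fin n) (Fin n) X),
      (Matrix.of fun i j => ((τ (M j i) : X) : H →L[ℂ] H)).cstarNorm
        = (Matrix.of fun i j => ((M i j : X) : H →L[ℂ] H)).cstarNorm)
    (Φ : X → Matrix (Fin 2) (Fin 2) (H →L[ℂ] H))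
    (hΦ : ∀ x : X, Φ x = !![0, (x : H →L[ℂ] H); star ((τ x : X) : H →L[ℂ] H), 0]) :
    (∀ x y : X, Φ (x + y) = Φ x + Φ y) ∧
    (∀ (c : ℂ) (x : X), Φ (c • x) = c • Φ x) ∧
    (∀ (n : ℕ) (M : Matrix (Fin n) (Fin n) X),
      (Matrix.of fun i j => (Φ (M i j)).toCLM).cstarNorm
        = (Matrix.of fun i j => ((M i j : X) : H →L[ℂ] H)).cstarNorm) ∧
    (∀ x : X, ∃ y : X, star (Φ x) = Φ y) ∧
    (∀ x : X, Φ (τ x) = star (Φ x)) := by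
  have hΦ_τ (x : X) : Φ (τ x) = star (Φ x) := by
    ext i j
    fin_cases i <;> fin_cases j <;> simp [hΦ, hinvol]
  refine ⟨fun x y => ?_, fun c x => ?_, fun n M => ?_, fun x => ⟨τ x, (hΦ_τ x).symm⟩, hΦ_τ⟩
  · ext i j
    fin_cases i <;> fin_cases j <;> simp [hΦ, hadd]
  · ext i j
    fin_cases i <;> fin_cases j <;> simp [hΦ, hsmul, star_smul]
  · simp only [hΦ]
    refine (Matrix.cstarNorm_offDiag (Matrix.of fun i j => ((M i j : X) : H →L[ℂ] H))
      (Matrix.of fun i j => ((τ (M j i) : X) : H →L[ℂ] H)).conjTranspose).trans ?_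
    rw [Matrix.cstarNorm_conjTranspose, hnorm, max_self]
end

section
/- Let A be a unital C*-algebra and X ⊆ A a closed linear subspace that is closed under the adjoint operation. Then there exists v ∈ X with 1 ≤ v if and only if the distance from 1 to X is strictly less than 1, i.e., inf{‖x − 1‖ : x ∈ X} < 1. -/
/-! A dominating `v ≥ 1` can be rescaled so that `1 - t • v` is positive with norm `< 1`.
Conversely, if `‖1 - x‖ < 1` for some `x ∈ X`, then the real part `h` of `x` still lies in `X`
and satisfies `‖1 - h‖ < 1`, so `h ≥ 1 - ‖1 - h‖ > 0` and a positive multiple of `h`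
dominates `1`. -/

open ComplexStarModule

lemma Submodule.realPart_mem {A : Type*} [AddCommGroup A] [Module ℂ A] [StarAddMonoid A]
    [StarModule ℂ A] {X : Submodule ℂ A} (hX : ∀ x ∈ X, star x ∈ X) {x : A} (hx : x ∈ X) :
    (ℜ x : A) ∈ X := by
  rw [realPart_apply_coe]
  exact X.smul_of_tower_mem _ (X.add_mem hx (hX x hx))

section CStarAlgebra

variable {A : Type*} [CStarAlgebra A]

lemma norm_one_sub_realPart_le (x : A) : ‖1 - (ℜ x : A)‖ ≤ ‖1 - x‖ := by
  have h : (1 : A) - ℜ x = ℜ (1 - x) := by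
    rw [map_sub, AddSubgroupClass.coe_sub, (IsSelfAdjoint.one (R := A)).coe_realPart]
  exact h ▸ realPart.norm_le (1 - x)

variable [PartialOrder A] [StarOrderedRing A]

lemma exists_norm_one_sub_smul_lt_one_of_one_le {v : A} (hv : 1 ≤ v) :
    ∃ t : ℝ, ‖1 - t • v‖ < 1 := by
  have hv0 : 0 ≤ v := zero_le_one.trans hv
  set t : ℝ := (‖v‖ + 1)⁻¹ with ht_def
  have ht0 : 0 < t := by positivity
  have ht1 : t ≤ 1 := inv_le_one_of_one_le₀ (by linarith [norm_nonneg v])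
  have htv : t • v ≤ 1 := by
    have hnorm : ‖t • v‖ ≤ 1 := by
      rw [norm_smul, Real.norm_of_nonneg ht0.le, ht_def, inv_mul_le_one₀ (by positivity)]
      linarith
    simpa using (CStarAlgebra.norm_le_iff_le_algebraMap (t • v) zero_le_one
      (smul_nonneg ht0.le hv0)).1 hnorm
  have hlow : 1 - t • v ≤ algebraMap ℝ A (1 - t) := by
    rw [map_sub, map_one, Algebra.algebraMap_eq_smul_one]
    exact sub_le_sub_left (smul_le_smul_of_nonneg_left hv ht0.le) 1
  refine ⟨t, ?_⟩
  calc ‖1 - t • v‖ ≤ 1 - t :=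
        (CStarAlgebra.norm_le_iff_le_algebraMap _ (by linarith) (sub_nonneg.2 htv)).2 hlow
    _ < 1 := by linarith

lemma IsSelfAdjoint.exists_one_le_smul_of_norm_one_sub_lt_one {a : A} (ha : IsSelfAdjoint a)
    (h : ‖1 - a‖ < 1) : ∃ c : ℝ, 1 ≤ c • a := by
  set r := ‖1 - a‖
  have hle : 1 - a ≤ algebraMap ℝ A r := ((IsSelfAdjoint.one (R := A)).sub ha).le_algebraMap_norm_self
  have hge : algebraMap ℝ A (1 - r) ≤ a := by
    rw [map_sub, map_one]
    exact sub_le_comm.1 hle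
  refine ⟨(1 - r)⁻¹, ?_⟩
  calc (1 : A) = (1 - r)⁻¹ • algebraMap ℝ A (1 - r) := by
        rw [Algebra.algebraMap_eq_smul_one, smul_smul, inv_mul_cancel₀ (by linarith), one_smul]
    _ ≤ (1 - r)⁻¹ • a := smul_le_smul_of_nonneg_left hge (inv_nonneg.2 (by linarith))

end CStarAlgebra

theorem exists_dominating_of_infDist_lt_one_general
    {A : Type*} [CStarAlgebra A] [PartialOrder A] [StarOrderedRing A]
    (X : Submodule ℂ A)
    (hXstar : ∀ x ∈ X, star x ∈ X) :
    (∃ v ∈ X, (1 : A) ≤ v) ↔ Metric.infDist (1 : A) (X : Set A) < 1 := by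
  constructor
  · rintro ⟨v, hvX, hv⟩
    obtain ⟨t, ht⟩ := exists_norm_one_sub_smul_lt_one_of_one_le hv
    calc Metric.infDist (1 : A) X ≤ dist 1 (t • v) :=
          Metric.infDist_le_dist_of_mem (X.smul_of_tower_mem t hvX)
      _ = ‖1 - t • v‖ := dist_eq_norm _ _
      _ < 1 := ht
  · intro hlt
    obtain ⟨x, hxX, hx⟩ := (Metric.infDist_lt_iff ⟨0, X.zero_mem⟩).1 hlt
    rw [dist_eq_norm] at hx
    obtain ⟨c, hc⟩ := (ℜ x).2.exists_one_le_smul_of_norm_one_sub_lt_one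
      ((norm_one_sub_realPart_le x).trans_lt hx)
    exact ⟨c • ℜ x, X.smul_of_tower_mem c (X.realPart_mem hXstar hxX), hc⟩

/-- Let `X` be a closed selfadjoint subspace of a unital C*-algebra `A`.
Then some `v ∈ X` dominates `1` if and only if the distance from `1` to `X` is strictly
less than `1`. -/
theorem exists_dominating_of_infDist_lt_one
    {A : Type*} [CStarAlgebra A] [PartialOrder A] [StarOrderedRing A]
    (X : Submodule ℂ A) (hXclosed : IsClosed (X : Set A))
    (hXstar : ∀ x ∈ X, star x ∈ X) :
    (∃ v ∈ X, (1 : A) ≤ v) ↔ Metric.infDist (1 : A) (X : Set A) < 1 :=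
  exists_dominating_of_infDist_lt_one_general X hXstar
end

section
/- Let A be a unital C*-algebra and X ⊆ A a closed linear subspace such that the distance from 1 to X equals 1, i.e., inf{‖x − 1‖ : x ∈ X} = 1. Then there exists a state φ on A vanishing on X: a continuous linear functional φ : A → ℂ with ‖φ‖ = 1, φ(1) = 1, φ(a) a nonnegative real for every a ≥ 0 in A, and φ(x) = 0 for all x ∈ X. -/
open scoped ComplexOrder

/-!
Hahn–Banach in the seminormed quotient `A ⧸ X` gives a functional `φ` with `‖φ‖ ≤ 1`, vanishing
on `X`, and with `φ 1 = dist(1, X) = 1`. Such a unital contraction on a C*-algebra is positive.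
For self-adjoint `a` and real `t`, the C*-identity gives `‖a + it‖² = ‖a² + t²‖ ≤ ‖a‖² + t²`,
so `|φ a + it|² ≤ ‖a‖² + t²` for every `t`, which forces `Im φ a = 0`; for `a ≥ 0` one has
`0 ≤ ‖a‖ - a ≤ ‖a‖`, hence `|‖a‖ - φ a| ≤ ‖a‖` and `Re φ a ≥ 0`.
-/

lemma eq_zero_of_forall_mul_le {b K : ℝ} (h : ∀ t : ℝ, b * t ≤ K) : b = 0 := by
  by_contra hb
  have := h ((K + 1) / b)
  rw [mul_div_cancel₀ _ hb] at this
  linarith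

namespace Submodule

variable {𝕜 E : Type*} [RCLike 𝕜] [SeminormedAddCommGroup E] [NormedSpace 𝕜 E]

lemma norm_mkQL_le (X : Submodule 𝕜 E) : ‖X.mkQL‖ ≤ 1 :=
  ContinuousLinearMap.opNorm_le_bound _ zero_le_one fun x => by
    simpa using Quotient.norm_mk_le X x

lemma exists_dual_eq_infDist (X : Submodule 𝕜 E) (e : E) :
    ∃ g : StrongDual 𝕜 E, ‖g‖ ≤ 1 ∧ g e = Metric.infDist e X ∧ ∀ x ∈ X, g x = 0 := by
  obtain ⟨g, hg, hge⟩ := exists_dual_vector'' 𝕜 (X.mkQ e)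
  refine ⟨g ∘L X.mkQL, ?_, ?_, fun x hx => ?_⟩
  · calc ‖g ∘L X.mkQL‖ ≤ ‖g‖ * ‖X.mkQL‖ := g.opNorm_comp_le _
      _ ≤ 1 := mul_le_one₀ hg (norm_nonneg _) X.norm_mkQL_le
  · rw [ContinuousLinearMap.comp_apply, mkQL_apply, hge]
    exact congrArg _ (QuotientAddGroup.norm_mk (S := X.toAddSubgroup) e)
  · simp [(Quotient.mk_eq_zero X).mpr hx]

end Submodule

lemma CStarRing.norm_one_le {E : Type*} [NormedRing E] [StarRing E] [CStarRing E] :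
    ‖(1 : E)‖ ≤ 1 := by
  rcases subsingleton_or_nontrivial E with _ | _
  · simp [Subsingleton.elim (1 : E) 0]
  · exact norm_one.le

section CStarAlgebra

open Complex

variable {A : Type*} [CStarAlgebra A]

lemma IsSelfAdjoint.norm_add_algebraMap_mul_I_sq_le {a : A} (ha : IsSelfAdjoint a) (t : ℝ) :
    ‖a + algebraMap ℂ A (t * I)‖ ^ 2 ≤ ‖a‖ ^ 2 + t ^ 2 := by
  set z := algebraMap ℂ A (t * I)
  have hz : star z = -z := by
    rw [← algebraMap_star_comm, ← map_neg]
    simp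
  have hzz : z * z = -algebraMap ℂ A (t ^ 2 : ℝ) := by
    rw [← map_mul, ← map_neg]
    congr 1
    push_cast
    linear_combination (t : ℂ) ^ 2 * I_sq
  have hprod : star (a + z) * (a + z) = a * a + algebraMap ℂ A (t ^ 2 : ℝ) := by
    rw [star_add, ha.star_eq, hz, ← sub_eq_add_neg,
      ← (Algebra.commute_algebraMap_right _ a).mul_self_sub_mul_self_eq', hzz, sub_neg_eq_add]
  calc ‖a + z‖ ^ 2 = ‖a * a + algebraMap ℂ A (t ^ 2 : ℝ)‖ := by
        rw [sq, ← CStarRing.norm_star_mul_self, hprod]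
    _ ≤ ‖a * a‖ + ‖algebraMap ℂ A (t ^ 2 : ℝ)‖ := norm_add_le _ _
    _ ≤ ‖a‖ ^ 2 + t ^ 2 := by
        gcongr
        · exact sq ‖a‖ ▸ norm_mul_le a a
        · rw [Algebra.algebraMap_eq_smul_one]
          refine (norm_smul_le _ _).trans ?_
          simpa [sq_abs] using mul_le_of_le_one_right (sq_nonneg t) CStarRing.norm_one_le

namespace ContinuousLinearMap

variable (φ : A →L[ℂ] ℂ)

lemma norm_eq_one_of_map_one (hφ : ‖φ‖ ≤ 1) (h1 : φ 1 = 1) : ‖φ‖ = 1 := by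
  refine le_antisymm hφ ?_
  simpa [h1] using
    φ.le_opNorm 1 |>.trans (mul_le_of_le_one_right (norm_nonneg φ) CStarRing.norm_one_le)

lemma im_map_eq_zero_of_isSelfAdjoint (hφ : ‖φ‖ ≤ 1) (h1 : φ 1 = 1) {a : A}
    (ha : IsSelfAdjoint a) : (φ a).im = 0 := by
  suffices ∀ t : ℝ, 2 * (φ a).im * t ≤ ‖a‖ ^ 2 - ‖φ a‖ ^ 2 by
    simpa using eq_zero_of_forall_mul_le this
  intro t
  have hmap : φ (a + algebraMap ℂ A (t * I)) = φ a + t * I := by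
    simp [Algebra.algebraMap_eq_smul_one, h1]
  have hle : ‖φ a + t * I‖ ≤ ‖a + algebraMap ℂ A (t * I)‖ := by
    simpa only [hmap, one_mul] using φ.le_of_opNorm_le hφ (a + algebraMap ℂ A (t * I))
  have hsq : ‖φ a + t * I‖ ^ 2 = ‖φ a‖ ^ 2 + 2 * (φ a).im * t + t ^ 2 := by
    simp only [Complex.sq_norm, Complex.normSq_apply, add_re, add_im, mul_re, mul_im,
      ofReal_re, ofReal_im, I_re, I_im]
    ring
  nlinarith [pow_le_pow_left₀ (norm_nonneg _) hle 2, ha.norm_add_algebraMap_mul_I_sq_le t]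

variable [PartialOrder A] [StarOrderedRing A]

lemma re_map_nonneg_of_nonneg (hφ : ‖φ‖ ≤ 1) (h1 : φ 1 = 1) {a : A} (ha : 0 ≤ a) :
    0 ≤ (φ a).re := by
  have hmap : φ (algebraMap ℝ A ‖a‖ - a) = ‖a‖ - φ a := by
    simp [Algebra.algebraMap_eq_smul_one, h1]
  have hle : ‖algebraMap ℝ A ‖a‖ - a‖ ≤ ‖a‖ :=
    ((CStarAlgebra.mem_Icc_algebraMap_iff_norm_le (norm_nonneg a)).1
      ⟨sub_nonneg.2 (IsSelfAdjoint.of_nonneg ha).le_algebraMap_norm_self, sub_le_self _ ha⟩).2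
  have := calc
    ‖a‖ - (φ a).re = (φ (algebraMap ℝ A ‖a‖ - a)).re := by simp [hmap]
    _ ≤ ‖φ (algebraMap ℝ A ‖a‖ - a)‖ := re_le_norm _
    _ ≤ 1 * ‖algebraMap ℝ A ‖a‖ - a‖ := φ.le_of_opNorm_le hφ _
    _ = ‖algebraMap ℝ A ‖a‖ - a‖ := one_mul _
    _ ≤ ‖a‖ := hle
  linarith

lemma map_nonneg_of_nonneg (hφ : ‖φ‖ ≤ 1) (h1 : φ 1 = 1) {a : A} (ha : 0 ≤ a) : 0 ≤ φ a :=
  Complex.nonneg_iff.2 ⟨φ.re_map_nonneg_of_nonneg hφ h1 ha,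
    (φ.im_map_eq_zero_of_isSelfAdjoint hφ h1 (.of_nonneg ha)).symm⟩

end ContinuousLinearMap

end CStarAlgebra

theorem exists_state_annihilating_of_infDist_eq_one_general
    {A : Type*} [CStarAlgebra A] [PartialOrder A] [StarOrderedRing A]
    (X : Submodule ℂ A)
    (hdist : Metric.infDist (1 : A) (X : Set A) = 1) :
    ∃ φ : A →L[ℂ] ℂ, ‖φ‖ = 1 ∧ φ 1 = 1 ∧ (∀ a : A, 0 ≤ a → 0 ≤ φ a) ∧
      ∀ x ∈ X, φ x = 0 := by
  obtain ⟨φ, hφ, hφ1, hφX⟩ := X.exists_dual_eq_infDist (1 : A)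
  rw [hdist, RCLike.ofReal_one] at hφ1
  exact ⟨φ, φ.norm_eq_one_of_map_one hφ hφ1, hφ1,
    fun _ ↦ φ.map_nonneg_of_nonneg hφ hφ1, hφX⟩

/-- If `X` is a closed subspace of a unital C*-algebra `A` at distance exactly
`1` from the identity, then there is a state `φ` on `A` (a positive continuous linear
functional of norm `1` with `φ(1) = 1`) vanishing on `X`. -/
theorem exists_state_annihilating_of_infDist_eq_one
    {A : Type*} [CStarAlgebra A] [PartialOrder A] [StarOrderedRing A]
    (X : Submodule ℂ A) (hXclosed : IsClosed (X : Set A))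
    (hdist : Metric.infDist (1 : A) (X : Set A) = 1) :
    ∃ φ : A →L[ℂ] ℂ, ‖φ‖ = 1 ∧ φ 1 = 1 ∧ (∀ a : A, 0 ≤ a → 0 ≤ φ a) ∧
      ∀ x ∈ X, φ x = 0 :=
  exists_state_annihilating_of_infDist_eq_one_general X hdist
end
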